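/- arXiv:2510.18259 — 2 statements merged into one kernel-verified Lean document; each statement's English description precedes it below -/
import Mathlib

section
/- (Bound for M_B^q ∘ S_t.) For every 1 ≤ t ≤ N, if γ < 1/(α_B tr(H^q)), then M_B^q ∘ S_t ⪯ [α_B · tr(B_0 − (I − γH^q)^t B_0 (I − γH^q)^t) / (γ (1 − γ α_B tr(H^q)))] · H^q. -/
/-!
Write `P = 1 - γ H`. Expanding the square, `tr B_{k+1} = tr B_k - 2γ tr(H B_k) + γ² tr(M B_k)`,
and the fourth-moment bound turns this into `tr B_{k+1} ≤ tr B_k - γ(2 - γα tr H) tr(H B_k)`;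
telescoping bounds `γ(2 - γα tr H) Σ_{k<t} tr(H B_k)` by `tr B_0 - tr B_t`. The variance
inequality `E[X] A E[X] ⪯ E[X A X]` for `X = 1 - γS` gives `P B_k P ⪯ B_{k+1}`, hence
`P^t B_0 P^t ⪯ B_t`, which controls `tr B_t` from below. Finally
`M(Σ B_k) = Σ M B_k ⪯ α (Σ tr(H B_k)) H`, again by the fourth-moment bound.
-/

open MeasureTheory Matrix Finset

noncomputable section

/-- Entrywise expectation of a matrix-valued random variable. -/
def mex {Ω : Type*} [MeasurableSpace Ω] (μ : Measure Ω) {m n : Type*}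
    (A : Ω → Matrix m n ℝ) : Matrix m n ℝ :=
  Matrix.of fun i j => ∫ ω, A ω i j ∂μ

/-- Entrywise expectation of a vector-valued random variable. -/
def vex {Ω : Type*} [MeasurableSpace Ω] (μ : Measure Ω) {n : Type*}
    (u : Ω → n → ℝ) : n → ℝ :=
  fun i => ∫ ω, u ω i ∂μ

/-- Loewner (positive semidefinite) order on real matrices: `loew A B ↔ A ⪯ B`. -/
def loew {n : Type*} [Fintype n] (A B : Matrix n n ℝ) : Prop :=
  (B - A).PosSemidef

-- In this order `A ≤ B` unfolds to `(B - A).PosSemidef`, i.e. to `loew A B`.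
open scoped MatrixOrder

lemma one_sub_smul_mul_mul_one_sub_smul {𝕜 R : Type*} [CommRing 𝕜] [Ring R] [Algebra 𝕜 R]
    (γ : 𝕜) (S A : R) :
    (1 - γ • S) * A * (1 - γ • S) = A - γ • (S * A + A * S) + γ ^ 2 • (S * A * S) := by
  simp only [sub_mul, mul_sub, one_mul, mul_one, smul_mul_assoc, mul_smul_comm, smul_add]
  module

lemma pow_mul_mul_pow_le_of_conjugate_le {R : Type*} [Ring R] [PartialOrder R] [StarRing R]
    [StarOrderedRing R] {P : R} (hP : IsSelfAdjoint P) {B : ℕ → R}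
    (hB : ∀ k, P * B k * P ≤ B (k + 1)) (k : ℕ) : P ^ k * B 0 * P ^ k ≤ B k := by
  induction k with
  | zero => simp
  | succ k ih =>
    calc P ^ (k + 1) * B 0 * P ^ (k + 1) = P * (P ^ k * B 0 * P ^ k) * P := by
          rw [pow_succ']; nth_rw 2 [(Commute.self_pow P k).eq]; simp only [mul_assoc]
      _ ≤ P * B k * P := hP.conjugate_le_conjugate ih
      _ ≤ B (k + 1) := hB k

lemma mul_sum_range_le_sub_of_le_sub {α : Type*} [Ring α] [PartialOrder α]
    [IsOrderedAddMonoid α] {a b : ℕ → α} {c : α} (h : ∀ k, a (k + 1) ≤ a k - c * b k)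
    (n : ℕ) :
    c * ∑ k ∈ range n, b k ≤ a 0 - a n := by
  rw [mul_sum, ← sum_range_sub']
  exact sum_le_sum fun k _ => le_sub_comm.mp (h k)

namespace Matrix

variable {n : Type*}

lemma PosSemidef.trace_mul_nonneg [Fintype n] {A B : Matrix n n ℝ} (hA : A.PosSemidef)
    (hB : B.PosSemidef) : 0 ≤ (A * B).trace := by
  classical
  obtain ⟨R, rfl⟩ := CStarAlgebra.nonneg_iff_eq_star_mul_self.mp hA.nonneg
  rw [mul_assoc, trace_mul_comm, mul_assoc, ← mul_assoc]
  exact (hB.mul_mul_conjTranspose_same R).trace_nonneg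

lemma trace_mono [Fintype n] {A B : Matrix n n ℝ} (h : A ≤ B) : A.trace ≤ B.trace :=
  OrderHomClass.mono (tracePositiveLinearMap n ℝ ℝ) h

lemma smul_le_smul_of_posSemidef {a b : ℝ} {H : Matrix n n ℝ} (hab : a ≤ b)
    (hH : H.PosSemidef) : a • H ≤ b • H := by
  rw [le_iff, ← sub_smul]
  exact hH.smul (sub_nonneg.mpr hab)

end Matrix

variable {Ω : Type*} [MeasurableSpace Ω] {μ : Measure Ω}

def EntrywiseIntegrable {m n : Type*} (μ : Measure Ω) (A : Ω → Matrix m n ℝ) : Prop :=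
  ∀ i j, Integrable (fun ω => A ω i j) μ

namespace EntrywiseIntegrable

variable {m n p : Type*} {A B : Ω → Matrix m n ℝ}

lemma add (hA : EntrywiseIntegrable μ A) (hB : EntrywiseIntegrable μ B) :
    EntrywiseIntegrable μ fun ω => A ω + B ω :=
  fun i j => (hA i j).add (hB i j)

lemma sub (hA : EntrywiseIntegrable μ A) (hB : EntrywiseIntegrable μ B) :
    EntrywiseIntegrable μ fun ω => A ω - B ω :=
  fun i j => (hA i j).sub (hB i j)

lemma const_smul (hA : EntrywiseIntegrable μ A) (c : ℝ) :
    EntrywiseIntegrable μ fun ω => c • A ω :=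
  fun i j => (hA i j).const_mul c

lemma const [IsFiniteMeasure μ] (C : Matrix m n ℝ) : EntrywiseIntegrable μ fun _ => C :=
  fun _ _ => integrable_const _

lemma mul_const [Fintype n] (hA : EntrywiseIntegrable μ A) (C : Matrix n p ℝ) :
    EntrywiseIntegrable μ fun ω => A ω * C := fun i j => by
  simp only [mul_apply]
  exact integrable_finsetSum _ fun k _ => (hA i k).mul_const _

lemma const_mul [Fintype m] (C : Matrix p m ℝ) (hA : EntrywiseIntegrable μ A) :
    EntrywiseIntegrable μ fun ω => C * A ω := fun i j => by
  simp only [mul_apply]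
  exact integrable_finsetSum _ fun k _ => (hA k j).const_mul _

end EntrywiseIntegrable

section Mex

variable {m n p : Type*} {A B : Ω → Matrix m n ℝ}

@[simp]
lemma mex_apply (i : m) (j : n) : mex μ A i j = ∫ ω, A ω i j ∂μ := rfl

lemma mex_add (hA : EntrywiseIntegrable μ A) (hB : EntrywiseIntegrable μ B) :
    mex μ (fun ω => A ω + B ω) = mex μ A + mex μ B := by
  ext i j
  exact integral_add (hA i j) (hB i j)

lemma mex_sub (hA : EntrywiseIntegrable μ A) (hB : EntrywiseIntegrable μ B) :
    mex μ (fun ω => A ω - B ω) = mex μ A - mex μ B := by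
  ext i j
  exact integral_sub (hA i j) (hB i j)

lemma mex_smul (c : ℝ) : mex μ (fun ω => c • A ω) = c • mex μ A := by
  ext i j
  exact integral_const_mul c _

lemma mex_const [IsProbabilityMeasure μ] (C : Matrix m n ℝ) : mex μ (fun _ => C) = C := by
  ext i j
  simp

lemma mex_mul_const [Fintype n] (hA : EntrywiseIntegrable μ A) (C : Matrix n p ℝ) :
    mex μ (fun ω => A ω * C) = mex μ A * C := by
  ext i j
  simp only [mex_apply, mul_apply]
  rw [integral_finsetSum _ fun k _ => (hA i k).mul_const _]
  exact sum_congr rfl fun k _ => integral_mul_const _ _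

lemma mex_const_mul [Fintype m] (C : Matrix p m ℝ) (hA : EntrywiseIntegrable μ A) :
    mex μ (fun ω => C * A ω) = C * mex μ A := by
  ext i j
  simp only [mex_apply, mul_apply]
  rw [integral_finsetSum _ fun k _ => (hA k j).const_mul _]
  exact sum_congr rfl fun k _ => integral_const_mul _ _

lemma mex_finsetSum {ι : Type*} (s : Finset ι) {A : ι → Ω → Matrix m n ℝ}
    (hA : ∀ k ∈ s, EntrywiseIntegrable μ (A k)) :
    mex μ (fun ω => ∑ k ∈ s, A k ω) = ∑ k ∈ s, mex μ (A k) := by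
  ext i j
  simp only [mex_apply, Matrix.sum_apply]
  exact integral_finsetSum s fun k hk => hA k hk i j

lemma isHermitian_mex {A : Ω → Matrix n n ℝ} (hA : ∀ ω, (A ω).IsHermitian) :
    (mex μ A).IsHermitian := by
  ext i j
  simp only [conjTranspose_apply, star_trivial, mex_apply]
  exact integral_congr_ae (ae_of_all _ fun ω => (hA ω).apply i j)

lemma dotProduct_mex_mulVec [Fintype n] {A : Ω → Matrix n n ℝ} (hA : EntrywiseIntegrable μ A)
    (x : n → ℝ) : x ⬝ᵥ mex μ A *ᵥ x = ∫ ω, x ⬝ᵥ A ω *ᵥ x ∂μ := by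
  simp only [dotProduct, mulVec, mex_apply, mul_sum]
  rw [integral_finsetSum _ fun i _ =>
    integrable_finsetSum _ fun j _ => ((hA i j).mul_const _).const_mul _]
  refine sum_congr rfl fun i _ => ?_
  rw [integral_finsetSum _ fun j _ => ((hA i j).mul_const _).const_mul _]
  exact sum_congr rfl fun j _ => by rw [integral_const_mul, integral_mul_const]

lemma posSemidef_mex [Fintype n] {A : Ω → Matrix n n ℝ} (hA : ∀ ω, (A ω).PosSemidef)
    (hAi : EntrywiseIntegrable μ A) : (mex μ A).PosSemidef := by
  refine .of_dotProduct_mulVec_nonneg (isHermitian_mex fun ω => (hA ω).isHermitian) fun x => ?_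
  rw [star_trivial, dotProduct_mex_mulVec hAi]
  exact integral_nonneg fun ω => by simpa using (hA ω).dotProduct_mulVec_nonneg x

lemma mex_mul_mul_le_mex [Fintype n] [IsProbabilityMeasure μ] {X : Ω → Matrix n n ℝ}
    {A : Matrix n n ℝ} (hXh : ∀ ω, (X ω).IsHermitian) (hA : A.PosSemidef)
    (hX : EntrywiseIntegrable μ X) (hXAX : EntrywiseIntegrable μ fun ω => X ω * A * X ω) :
    mex μ X * A * mex μ X ≤ mex μ fun ω => X ω * A * X ω := by
  set E := mex μ X
  have hE : E.IsHermitian := isHermitian_mex hXh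
  have hexpand : (fun ω => (X ω - E) * A * (X ω - E))
      = fun ω => X ω * A * X ω - E * A * X ω - X ω * (A * E) + E * A * E :=
    funext fun ω => by noncomm_ring
  have hL := hXAX.sub (hX.const_mul (E * A))
  have hLR := hL.sub (hX.mul_const (A * E))
  have hvar : (mex μ fun ω => (X ω - E) * A * (X ω - E)).PosSemidef := by
    refine posSemidef_mex (fun ω => ?_) ?_
    · simpa only [((hXh ω).sub hE).eq] using hA.mul_mul_conjTranspose_same (X ω - E)
    · rw [hexpand]
      exact hLR.add (.const _)
  have hmean : (mex μ fun ω => (X ω - E) * A * (X ω - E))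
      = (mex μ fun ω => X ω * A * X ω) - E * A * E := by
    rw [hexpand, mex_add hLR (.const _), mex_sub hL (hX.mul_const _),
      mex_sub hXAX (hX.const_mul _), mex_const, mex_const_mul _ hX, mex_mul_const hX]
    noncomm_ring
  rw [le_iff, ← hmean]
  exact hvar

end Mex

section Contraction

variable {n : Type*} [Fintype n] [DecidableEq n] {S : Ω → Matrix n n ℝ} {γ : ℝ}

lemma EntrywiseIntegrable.of_one_sub_smul_mul_self [IsFiniteMeasure μ] (hγ : γ ≠ 0)
    (hS2 : EntrywiseIntegrable μ fun ω => S ω * S ω)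
    (hT : EntrywiseIntegrable μ fun ω => (1 - γ • S ω) * (1 - γ • S ω)) :
    EntrywiseIntegrable μ S := by
  have hS : S = fun ω =>
      (2 * γ)⁻¹ • (1 + γ ^ 2 • (S ω * S ω) - (1 - γ • S ω) * (1 - γ • S ω)) := by
    funext ω
    have h := one_sub_smul_mul_mul_one_sub_smul γ (S ω) 1
    rw [mul_one, mul_one, one_mul] at h
    rw [h, show 1 + γ ^ 2 • (S ω * S ω) - (1 - γ • (S ω + S ω) + γ ^ 2 • (S ω * S ω))
      = (2 * γ) • S ω by module, smul_smul, inv_mul_cancel₀ (mul_ne_zero two_ne_zero hγ),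
      one_smul]
  rw [hS]
  exact (((EntrywiseIntegrable.const 1).add (hS2.const_smul _)).sub hT).const_smul _

lemma mex_one_sub_smul_mul_mul [IsProbabilityMeasure μ] (A : Matrix n n ℝ)
    (hS : EntrywiseIntegrable μ S) (hSAS : EntrywiseIntegrable μ fun ω => S ω * A * S ω) :
    mex μ (fun ω => (1 - γ • S ω) * A * (1 - γ • S ω))
      = A - γ • (mex μ S * A + A * mex μ S) + γ ^ 2 • mex μ fun ω => S ω * A * S ω := by
  simp_rw [one_sub_smul_mul_mul_one_sub_smul]
  have hlin := (hS.mul_const A).add (hS.const_mul A)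
  rw [mex_add ((EntrywiseIntegrable.const A).sub (hlin.const_smul γ)) (hSAS.const_smul _),
    mex_sub (.const A) (hlin.const_smul γ), mex_const, mex_smul, mex_smul,
    mex_add (hS.mul_const A) (hS.const_mul A), mex_mul_const hS, mex_const_mul A hS]

lemma trace_mex_one_sub_smul_mul_mul_le [IsProbabilityMeasure μ] {H A : Matrix n n ℝ} {α : ℝ}
    (hS : EntrywiseIntegrable μ S) (hSAS : EntrywiseIntegrable μ fun ω => S ω * A * S ω)
    (hSmean : mex μ S = H)
    (hfourth : (mex μ fun ω => S ω * A * S ω) ≤ (α * (H * A).trace) • H) :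
    (mex μ fun ω => (1 - γ • S ω) * A * (1 - γ • S ω)).trace
      ≤ A.trace - γ * (2 - γ * α * H.trace) * (H * A).trace := by
  have hM := trace_mono hfourth
  rw [trace_smul, smul_eq_mul] at hM
  rw [mex_one_sub_smul_mul_mul A hS hSAS, hSmean, trace_add, trace_sub, trace_smul, trace_smul,
    trace_add, trace_mul_comm A H, smul_eq_mul, smul_eq_mul]
  nlinarith [mul_le_mul_of_nonneg_left hM (sq_nonneg γ)]

lemma conj_le_mex_one_sub_smul_mul_mul [IsProbabilityMeasure μ] {H A : Matrix n n ℝ}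
    (hSh : ∀ ω, (S ω).IsHermitian) (hA : A.PosSemidef) (hS : EntrywiseIntegrable μ S)
    (hT : EntrywiseIntegrable μ fun ω => (1 - γ • S ω) * A * (1 - γ • S ω))
    (hSmean : mex μ S = H) :
    (1 - γ • H) * A * (1 - γ • H)
      ≤ mex μ fun ω => (1 - γ • S ω) * A * (1 - γ • S ω) := by
  have hmean : mex μ (fun ω => 1 - γ • S ω) = 1 - γ • H := by
    rw [mex_sub (.const 1) (hS.const_smul γ), mex_const, mex_smul, hSmean]
  rw [← hmean]
  exact mex_mul_mul_le_mex (fun ω => isHermitian_one.sub ((hSh ω).smul (.all γ))) hA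
    ((EntrywiseIntegrable.const 1).sub (hS.const_smul γ)) hT

end Contraction

lemma mex_mul_sum_mul_le {n : Type*} [Fintype n] {S : Ω → Matrix n n ℝ} {H : Matrix n n ℝ}
    {α : ℝ} {B : ℕ → Matrix n n ℝ}
    (hSBS : ∀ k, EntrywiseIntegrable μ fun ω => S ω * B k * S ω)
    (hfourth : ∀ k, (mex μ fun ω => S ω * B k * S ω) ≤ (α * (H * B k).trace) • H)
    (t : ℕ) :
    (mex μ fun ω => S ω * (∑ k ∈ range t, B k) * S ω)
      ≤ (α * ∑ k ∈ range t, (H * B k).trace) • H := by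
  simp_rw [mul_sum, sum_mul]
  rw [mex_finsetSum _ fun k _ => hSBS k, sum_smul]
  exact sum_le_sum fun k _ => hfourth k

theorem bound_MBq_St_general
    (d : ℕ)
    (γ : ℝ) (hγ : 0 < γ)
    -- the randomness of one quantized batch; S = (1/B) X^{qT} X^q
    (Ωs : Type) [MeasurableSpace Ωs] (ν : Measure Ωs) [IsProbabilityMeasure ν]
    (S : Ωs → Matrix (Fin d) (Fin d) ℝ)
    (hSpsd : ∀ ω, (S ω).PosSemidef)
    (Hq : Matrix (Fin d) (Fin d) ℝ) (hHqpd : Hq.PosDef)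
    (hSmean : mex ν S = Hq)
    -- entrywise integrability of the operator integrands
    (hIntM : ∀ A : Matrix (Fin d) (Fin d) ℝ, ∀ i j : Fin d,
      Integrable (fun ω => (S ω * A * S ω) i j) ν)
    (hIntT : ∀ A : Matrix (Fin d) (Fin d) ℝ, ∀ i j : Fin d,
      Integrable (fun ω =>
        (((1 : Matrix (Fin d) (Fin d) ℝ) - γ • S ω) * A *
          ((1 : Matrix (Fin d) (Fin d) ℝ) - γ • S ω)) i j) ν)
    -- fourth-moment assumption: M_B^q ∘ A ⪯ α_B tr(H^q A) H^q for PSD A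
    (αB : ℝ) (hαB : 0 < αB)
    (hfourth : ∀ A : Matrix (Fin d) (Fin d) ℝ, A.PosSemidef →
      loew (mex ν (fun ω => S ω * A * S ω)) ((αB * (Hq * A).trace) • Hq))
    -- bias iterates: B_t = (I − γT_B^q)^t ∘ B₀
    (B0 : Matrix (Fin d) (Fin d) ℝ) (hB0psd : B0.PosSemidef)
    (Bseq : ℕ → Matrix (Fin d) (Fin d) ℝ)
    (hBseq0 : Bseq 0 = B0)
    (hBseqStep : ∀ t : ℕ, Bseq (t + 1) =
      mex ν (fun ω => ((1 : Matrix (Fin d) (Fin d) ℝ) - γ • S ω) * Bseq t *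
        ((1 : Matrix (Fin d) (Fin d) ℝ) - γ • S ω)))
    (hstep : γ < 1 / (αB * Hq.trace))
    (t : ℕ) :
    loew (mex ν (fun ω => S ω * (∑ k ∈ Finset.range t, Bseq k) * S ω))
      ((αB *
          (B0 - ((1 : Matrix (Fin d) (Fin d) ℝ) - γ • Hq) ^ t * B0 *
            ((1 : Matrix (Fin d) (Fin d) ℝ) - γ • Hq) ^ t).trace /
        (γ * (1 - γ * αB * Hq.trace))) • Hq) := by
  set P : Matrix (Fin d) (Fin d) ℝ := 1 - γ • Hq
  have hP : IsSelfAdjoint P :=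
    isHermitian_iff_isSelfAdjoint.mp (isHermitian_one.sub (hHqpd.isHermitian.smul (.all γ)))
  have hS : EntrywiseIntegrable ν S := .of_one_sub_smul_mul_self hγ.ne'
    (by simpa only [EntrywiseIntegrable, mul_one] using hIntM 1)
    (by simpa only [EntrywiseIntegrable, mul_one] using hIntT 1)
  have hconj : ∀ k, (Bseq k).PosSemidef → P * Bseq k * P ≤ Bseq (k + 1) := fun k hk =>
    hBseqStep k ▸ conj_le_mex_one_sub_smul_mul_mul (fun ω => (hSpsd ω).isHermitian) hk hS
      (hIntT _) hSmean
  have hBpsd : ∀ k, (Bseq k).PosSemidef := by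
    intro k
    induction k with
    | zero => exact hBseq0 ▸ hB0psd
    | succ k ih => exact ((hP.conjugate_nonneg ih.nonneg).trans (hconj k ih)).posSemidef
  have hlower : P ^ t * B0 * P ^ t ≤ Bseq t :=
    hBseq0 ▸ pow_mul_mul_pow_le_of_conjugate_le hP (fun k => hconj k (hBpsd k)) t
  have hdecay : ∀ k, (Bseq (k + 1)).trace
      ≤ (Bseq k).trace - γ * (2 - γ * αB * Hq.trace) * (Hq * Bseq k).trace := fun k =>
    hBseqStep k ▸ trace_mex_one_sub_smul_mul_mul_le hS (hIntM _) hSmean (hfourth _ (hBpsd k))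
  have hsmall : γ * αB * Hq.trace < 1 := by
    have hpos : 0 < αB * Hq.trace :=
      lt_of_not_ge fun h => (hγ.trans hstep).not_ge (one_div_nonpos.mpr h)
    simpa only [mul_assoc] using (lt_div_iff₀ hpos).mp hstep
  have hsum : ∑ k ∈ range t, (Hq * Bseq k).trace
      ≤ (B0 - P ^ t * B0 * P ^ t).trace / (γ * (1 - γ * αB * Hq.trace)) := by
    have htele := mul_sum_range_le_sub_of_le_sub (a := fun k => (Bseq k).trace)
      (b := fun k => (Hq * Bseq k).trace) hdecay t
    have hnonneg : 0 ≤ ∑ k ∈ range t, (Hq * Bseq k).trace :=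
      sum_nonneg fun k _ => hHqpd.posSemidef.trace_mul_nonneg (hBpsd k)
    rw [hBseq0] at htele
    rw [le_div_iff₀ (mul_pos hγ (by linarith)), trace_sub]
    nlinarith [trace_mono hlower, mul_nonneg hγ.le hnonneg]
  calc _ ≤ (αB * ∑ k ∈ range t, (Hq * Bseq k).trace) • Hq :=
        mex_mul_sum_mul_le (fun k => hIntM _) (fun k => hfourth _ (hBpsd k)) t
    _ ≤ _ := smul_le_smul_of_posSemidef (by rw [mul_div_assoc]; gcongr) hHqpd.posSemidef

theorem bound_MBq_St
    (d N : ℕ) (hN : 0 < N)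
    (γ : ℝ) (hγ : 0 < γ)
    -- the randomness of one quantized batch; S = (1/B) X^{qT} X^q
    (Ωs : Type) [MeasurableSpace Ωs] (ν : Measure Ωs) [IsProbabilityMeasure ν]
    (S : Ωs → Matrix (Fin d) (Fin d) ℝ)
    (hSpsd : ∀ ω, (S ω).PosSemidef)
    (Hq : Matrix (Fin d) (Fin d) ℝ) (hHqpd : Hq.PosDef)
    (hSmean : mex ν S = Hq)
    -- γ is small enough that I − γH^q ⪰ 0
    (hcontr : ((1 : Matrix (Fin d) (Fin d) ℝ) - γ • Hq).PosSemidef)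
    -- entrywise integrability of the operator integrands
    (hIntM : ∀ A : Matrix (Fin d) (Fin d) ℝ, ∀ i j : Fin d,
      Integrable (fun ω => (S ω * A * S ω) i j) ν)
    (hIntT : ∀ A : Matrix (Fin d) (Fin d) ℝ, ∀ i j : Fin d,
      Integrable (fun ω =>
        (((1 : Matrix (Fin d) (Fin d) ℝ) - γ • S ω) * A *
          ((1 : Matrix (Fin d) (Fin d) ℝ) - γ • S ω)) i j) ν)
    -- fourth-moment assumption: M_B^q ∘ A ⪯ α_B tr(H^q A) H^q for PSD A
    (αB : ℝ) (hαB : 0 < αB)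
    (hfourth : ∀ A : Matrix (Fin d) (Fin d) ℝ, A.PosSemidef →
      loew (mex ν (fun ω => S ω * A * S ω)) ((αB * (Hq * A).trace) • Hq))
    -- bias iterates: B_t = (I − γT_B^q)^t ∘ B₀
    (B0 : Matrix (Fin d) (Fin d) ℝ) (hB0psd : B0.PosSemidef)
    (Bseq : ℕ → Matrix (Fin d) (Fin d) ℝ)
    (hBseq0 : Bseq 0 = B0)
    (hBseqStep : ∀ t : ℕ, Bseq (t + 1) =
      mex ν (fun ω => ((1 : Matrix (Fin d) (Fin d) ℝ) - γ • S ω) * Bseq t *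
        ((1 : Matrix (Fin d) (Fin d) ℝ) - γ • S ω)))
    (hstep : γ < 1 / (αB * Hq.trace))
    (t : ℕ) (ht1 : 1 ≤ t) (htN : t ≤ N) :
    loew (mex ν (fun ω => S ω * (∑ k ∈ Finset.range t, Bseq k) * S ω))
      ((αB *
          (B0 - ((1 : Matrix (Fin d) (Fin d) ℝ) - γ • Hq) ^ t * B0 *
            ((1 : Matrix (Fin d) (Fin d) ℝ) - γ • Hq) ^ t).trace /
        (γ * (1 - γ * αB * Hq.trace))) • Hq) :=
  bound_MBq_St_general d γ hγ Ωs ν S hSpsd Hq hHqpd hSmean hIntM hIntT αB hαB hfourth B0 hB0psd Bseq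
    hBseq0 hBseqStep hstep t

end
end

section
/- (A bound for the variance.) If γ < 1/(α_B tr(H^q)), then variance := (1/N²) Σ_{t=0}^{N−1} Σ_{k=t}^{N−1} ⟨(I − γH^q)^{k−t} H^q, C_t⟩ satisfies variance ≤ [σ_G^{q,2} / (1 − γα_B tr(H^q))] · (k*/N + Nγ² Σ_{i>k*} (λ_i^q)²). -/
/-!
In an orthonormal eigenbasis `vᵢ` of `H` (eigenvalues `λᵢ`) write `qₜ(i) = vᵢᵀ Cₜ vᵢ`. Expanding
`E[(I - γS) C (I - γS)]` and applying the fourth-moment bound at `vᵢ` gives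
`qₜ₊₁(i) ≤ (1 - 2γλᵢ) qₜ(i) + γ²α tr(H Cₜ) λᵢ + γ²σ² λᵢ` with `tr(H Cₜ) = ∑ⱼ λⱼ qₜ(j)`.
With `c = γσ² / (1 - γα tr H)` this closes into the invariant `qₜ(i) ≤ c (1 - (1 - γλᵢ)ᵗ)`.
The variance is `N⁻² ∑ᵢ λᵢ ∑ₜ ∑ₖ (1 - γλᵢ)^(k-t) qₜ(i)`; each direction contributes at most
`N c / γ` (use `qₜ ≤ c` and sum the geometric series) and at most `N³ c γ λᵢ²` (use
`1 - (1 - γλᵢ)ᵗ ≤ t γ λᵢ`). Take the first bound for `i < k*` and the second for the rest.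
-/

open MeasureTheory Matrix Finset

noncomputable section

section Expectation

variable {Ω : Type*} [MeasurableSpace Ω] {μ : Measure Ω} {l m n : Type*}

theorem integrable_mul_apply [Fintype m] {f : Ω → Matrix l m ℝ}
    (hf : ∀ i j, Integrable (fun ω => f ω i j) μ) (A : Matrix m n ℝ) (i : l) (j : n) :
    Integrable (fun ω => (f ω * A) i j) μ := by
  simp only [mul_apply]
  exact integrable_finsetSum _ fun k _ => (hf i k).mul_const _

theorem integrable_apply_mul [Fintype m] {f : Ω → Matrix m n ℝ}
    (hf : ∀ i j, Integrable (fun ω => f ω i j) μ) (A : Matrix l m ℝ) (i : l) (j : n) :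
    Integrable (fun ω => (A * f ω) i j) μ := by
  simp only [mul_apply]
  exact integrable_finsetSum _ fun k _ => (hf k j).const_mul _

theorem integral_mul_apply [Fintype m] {f : Ω → Matrix l m ℝ}
    (hf : ∀ i j, Integrable (fun ω => f ω i j) μ) (A : Matrix m n ℝ) (i : l) (j : n) :
    ∫ ω, (f ω * A) i j ∂μ = (mex μ f * A) i j := by
  simp only [mul_apply]
  rw [integral_finsetSum _ fun k _ => (hf i k).mul_const _]
  simp only [integral_mul_const, mex, of_apply]

theorem integral_apply_mul [Fintype m] {f : Ω → Matrix m n ℝ}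
    (hf : ∀ i j, Integrable (fun ω => f ω i j) μ) (A : Matrix l m ℝ) (i : l) (j : n) :
    ∫ ω, (A * f ω) i j ∂μ = (A * mex μ f) i j := by
  simp only [mul_apply]
  rw [integral_finsetSum _ fun k _ => (hf k j).const_mul _]
  simp only [integral_const_mul, mex, of_apply]

variable [Fintype n]

theorem dotProduct_mulVec_mex {f : Ω → Matrix n n ℝ}
    (hf : ∀ i j, Integrable (fun ω => f ω i j) μ) (x y : n → ℝ) :
    x ⬝ᵥ mex μ f *ᵥ y = ∫ ω, x ⬝ᵥ f ω *ᵥ y ∂μ := by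
  have hxy : ∀ i j, Integrable (fun ω => x i * (f ω i j * y j)) μ := fun i j =>
    ((hf i j).mul_const _).const_mul _
  simp only [dotProduct, mulVec, mul_sum]
  rw [integral_finsetSum _ fun i _ => integrable_finsetSum _ fun j _ => hxy i j]
  refine sum_congr rfl fun i _ => ?_
  rw [integral_finsetSum _ fun j _ => hxy i j]
  simp only [integral_const_mul, integral_mul_const, mex, of_apply]

theorem posSemidef_mex_s18 {f : Ω → Matrix n n ℝ}
    (hf : ∀ i j, Integrable (fun ω => f ω i j) μ) (hpsd : ∀ ω, (f ω).PosSemidef) :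
    (mex μ f).PosSemidef := by
  refine PosSemidef.of_dotProduct_mulVec_nonneg ?_ fun x => ?_
  · ext i j
    simp only [conjTranspose_apply, star_trivial, mex, of_apply]
    exact integral_congr_ae (ae_of_all _ fun ω => (hpsd ω).1.apply i j)
  · rw [star_trivial, dotProduct_mulVec_mex hf]
    exact integral_nonneg fun ω => by simpa using (hpsd ω).dotProduct_mulVec_nonneg x

variable [DecidableEq n]

theorem sandwich_eq (γ : ℝ) (S A : Matrix n n ℝ) :
    (1 - γ • S) * A * (1 - γ • S) = A - γ • (S * A) - γ • (A * S) + γ ^ 2 • (S * A * S) := by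
  simp only [sub_mul, mul_sub, one_mul, mul_one, smul_mul_assoc, mul_smul_comm, smul_sub,
    smul_smul]
  module

theorem mex_sandwich [IsProbabilityMeasure μ] (γ : ℝ) {S : Ω → Matrix n n ℝ} (A : Matrix n n ℝ)
    (hS : ∀ i j, Integrable (fun ω => S ω i j) μ)
    (hSAS : ∀ i j, Integrable (fun ω => (S ω * A * S ω) i j) μ) :
    mex μ (fun ω => (1 - γ • S ω) * A * (1 - γ • S ω)) =
      A - γ • (mex μ S * A) - γ • (A * mex μ S) + γ ^ 2 • mex μ (fun ω => S ω * A * S ω) := by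
  ext i j
  have hSA := (integrable_mul_apply hS A i j).const_mul γ
  have hAS := (integrable_apply_mul hS A i j).const_mul γ
  change ∫ ω, ((1 - γ • S ω) * A * (1 - γ • S ω)) i j ∂μ = _
  simp only [sandwich_eq, Matrix.add_apply, Matrix.sub_apply, Matrix.smul_apply, smul_eq_mul]
  have h1 : Integrable (fun ω => A i j - γ * (S ω * A) i j) μ := (integrable_const _).sub hSA
  have h2 : Integrable (fun ω => A i j - γ * (S ω * A) i j - γ * (A * S ω) i j) μ := h1.sub hAS
  rw [integral_add h2 ((hSAS i j).const_mul _), integral_sub h1 hAS,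
    integral_sub (integrable_const _) hSA,
    integral_const_mul, integral_const_mul, integral_const_mul, integral_mul_apply hS,
    integral_apply_mul hS, integral_const, probReal_univ, one_smul]
  rfl

theorem integrable_apply_of_sandwich [IsFiniteMeasure μ] {γ : ℝ} (hγ : γ ≠ 0)
    {S : Ω → Matrix n n ℝ}
    (hT : ∀ (A : Matrix n n ℝ) i j, Integrable (fun ω => ((1 - γ • S ω) * A * (1 - γ • S ω)) i j) μ)
    (hM : ∀ (A : Matrix n n ℝ) i j, Integrable (fun ω => (S ω * A * S ω) i j) μ) (i j : n) :
    Integrable (fun ω => S ω i j) μ := by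
  have hS : (fun ω => S ω i j) = fun ω => ((1 : Matrix n n ℝ) i j
      + γ ^ 2 * (S ω * (1 : Matrix n n ℝ) * S ω) i j
      - ((1 - γ • S ω) * (1 : Matrix n n ℝ) * (1 - γ • S ω)) i j) / (2 * γ) := by
    funext ω
    rw [sandwich_eq]
    simp only [Matrix.add_apply, Matrix.sub_apply, Matrix.smul_apply, smul_eq_mul, mul_one,
      one_mul]
    field_simp
    ring
  rw [hS]
  exact (((integrable_const _).add ((hM 1 i j).const_mul _)).sub (hT 1 i j)).div_const _

end Expectation

theorem loew.dotProduct_mulVec_le {n : Type*} [Fintype n] {A B : Matrix n n ℝ} (h : loew A B)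
    (x : n → ℝ) : x ⬝ᵥ A *ᵥ x ≤ x ⬝ᵥ B *ᵥ x := by
  have := h.dotProduct_mulVec_nonneg x
  rw [star_trivial, sub_mulVec, dotProduct_sub] at this
  linarith

section Spectral

variable {ι n : Type*} [Fintype ι] (lam : ι → ℝ) (v : ι → n → ℝ)

theorem transpose_sum_smul_vecMulVec :
    (∑ i, lam i • vecMulVec (v i) (v i))ᵀ = ∑ i, lam i • vecMulVec (v i) (v i) := by
  simp only [transpose_sum, transpose_smul, transpose_vecMulVec]

variable [Fintype n]

theorem trace_sum_smul_vecMulVec_mul (C : Matrix n n ℝ) :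
    ((∑ i, lam i • vecMulVec (v i) (v i)) * C).trace = ∑ i, lam i * (v i ⬝ᵥ C *ᵥ v i) := by
  simp only [sum_mul, trace_sum, smul_mul_assoc, trace_smul, vecMulVec_mul, trace_vecMulVec,
    smul_eq_mul]
  refine sum_congr rfl fun i _ => ?_
  rw [dotProduct_mulVec, dotProduct_comm]

theorem mul_sum_smul_vecMulVec {M : Matrix n n ℝ} {p : ι → ℝ} (hM : ∀ i, M *ᵥ v i = p i • v i) :
    M * ∑ i, lam i • vecMulVec (v i) (v i) = ∑ i, (lam i * p i) • vecMulVec (v i) (v i) := by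
  simp only [mul_sum, mul_smul_comm, mul_vecMulVec, hM, smul_vecMulVec, smul_smul]

theorem sum_smul_vecMulVec_mulVec [DecidableEq ι]
    (hv : ∀ i j, v i ⬝ᵥ v j = if i = j then 1 else 0) (j : ι) :
    (∑ i, lam i • vecMulVec (v i) (v i)) *ᵥ v j = lam j • v j := by
  simp [sum_mulVec, smul_mulVec, vecMulVec_mulVec, hv]

variable [DecidableEq n]

theorem pow_mul_sum_smul_vecMulVec {M : Matrix n n ℝ} {p : ι → ℝ}
    (hM : ∀ i, M *ᵥ v i = p i • v i) (m : ℕ) :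
    M ^ m * ∑ i, lam i • vecMulVec (v i) (v i) =
      ∑ i, (lam i * p i ^ m) • vecMulVec (v i) (v i) := by
  induction m with
  | zero => simp
  | succ m ih =>
    rw [pow_succ', mul_assoc, ih, mul_sum_smul_vecMulVec _ _ hM]
    simp only [pow_succ, mul_assoc]

theorem trace_transpose_pow_mul_mul {H M : Matrix n n ℝ} {p : ι → ℝ}
    (hH : H = ∑ i, lam i • vecMulVec (v i) (v i)) (hM : ∀ i, M *ᵥ v i = p i • v i) (m : ℕ)
    (C : Matrix n n ℝ) :
    ((M ^ m * H)ᵀ * C).trace = ∑ i, lam i * p i ^ m * (v i ⬝ᵥ C *ᵥ v i) := by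
  rw [hH, pow_mul_sum_smul_vecMulVec _ _ hM, transpose_sum_smul_vecMulVec,
    trace_sum_smul_vecMulVec_mul]

theorem sum_sum_Ico_trace_eq {N : ℕ} {H M : Matrix n n ℝ} {p : ι → ℝ}
    (hH : H = ∑ i, lam i • vecMulVec (v i) (v i)) (hM : ∀ i, M *ᵥ v i = p i • v i)
    (C : ℕ → Matrix n n ℝ) :
    ∑ t ∈ range N, ∑ k ∈ Ico t N, ((M ^ (k - t) * H)ᵀ * C t).trace =
      ∑ i, ∑ t ∈ range N, ∑ k ∈ Ico t N, lam i * p i ^ (k - t) * (v i ⬝ᵥ C t *ᵥ v i) := by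
  calc _ = ∑ t ∈ range N, ∑ i, ∑ k ∈ Ico t N, lam i * p i ^ (k - t) * (v i ⬝ᵥ C t *ᵥ v i) :=
        sum_congr rfl fun t _ => by
          simp only [trace_transpose_pow_mul_mul lam v hH hM]
          exact sum_comm
    _ = _ := sum_comm

end Spectral

theorem le_mul_one_sub_pow_of_recursion {ι : Type*} [Fintype ι] {q : ℕ → ι → ℝ} {lam : ι → ℝ}
    {γ α σ : ℝ} (hγ : 0 ≤ γ) (hα : 0 ≤ α) (hσ : 0 ≤ σ) (hlam : ∀ i, 0 ≤ lam i)
    (hp : ∀ i, 0 ≤ 1 - γ * lam i) (hD : γ * α * ∑ i, lam i < 1)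
    (hq_nonneg : ∀ t i, 0 ≤ q t i) (hq_zero : ∀ i, q 0 i = 0)
    (hrec : ∀ t i, q (t + 1) i ≤
      (1 - 2 * γ * lam i) * q t i + γ ^ 2 * (α * ∑ j, lam j * q t j) * lam i + γ ^ 2 * σ * lam i) :
    ∀ t i, q t i ≤ γ * σ / (1 - γ * α * ∑ i, lam i) * (1 - (1 - γ * lam i) ^ t) := by
  set c := γ * σ / (1 - γ * α * ∑ i, lam i)
  have hc : 0 ≤ c := div_nonneg (mul_nonneg hγ hσ) (by linarith)
  have hcD : c * (1 - γ * α * ∑ i, lam i) = γ * σ := div_mul_cancel₀ _ (by linarith)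
  intro t
  induction t with
  | zero => simp [hq_zero]
  | succ t ih =>
    intro i
    have hγl : 0 ≤ γ * lam i := mul_nonneg hγ (hlam i)
    have hsum : ∑ j, lam j * q t j ≤ c * ∑ j, lam j := by
      rw [mul_sum]
      refine sum_le_sum fun j _ => ?_
      have hqc : q t j ≤ c := (ih j).trans <| mul_le_of_le_one_right hc <|
        sub_le_self _ (pow_nonneg (hp j) t)
      rw [mul_comm c]
      exact mul_le_mul_of_nonneg_left hqc (hlam j)
    have hquad :
        γ ^ 2 * (α * ∑ j, lam j * q t j) * lam i ≤ γ ^ 2 * (α * (c * ∑ j, lam j)) * lam i :=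
      mul_le_mul_of_nonneg_right (mul_le_mul_of_nonneg_left
        (mul_le_mul_of_nonneg_left hsum hα) (sq_nonneg γ)) (hlam i)
    calc q (t + 1) i ≤ (1 - γ * lam i) * q t i + γ * lam i * c := by
          linear_combination hrec t i + hquad + mul_nonneg hγl (hq_nonneg t i) - γ * lam i * hcD
      _ ≤ (1 - γ * lam i) * (c * (1 - (1 - γ * lam i) ^ t)) + γ * lam i * c := by
          gcongr
          · exact hp i
          · exact ih i
      _ = c * (1 - (1 - γ * lam i) ^ (t + 1)) := by ring

section Iterates

variable {n : Type*} [Fintype n]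

theorem dotProduct_mulVec_step_le {H A M : Matrix n n ℝ} {x : n → ℝ} {l a γ s : ℝ}
    (hH : Hᵀ = H) (hHx : H *ᵥ x = l • x) (hx : x ⬝ᵥ x = 1) (hM : loew M (a • H)) :
    x ⬝ᵥ (A - γ • (H * A) - γ • (A * H) + γ ^ 2 • M + s • H) *ᵥ x ≤
      (1 - 2 * γ * l) * (x ⬝ᵥ A *ᵥ x) + γ ^ 2 * a * l + s * l := by
  have hxH : x ᵥ* H = l • x := by rw [← mulVec_transpose, hH, hHx]
  have hHA : x ⬝ᵥ (H * A) *ᵥ x = l * (x ⬝ᵥ A *ᵥ x) := by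
    rw [← mulVec_mulVec, dotProduct_mulVec, hxH, smul_dotProduct, smul_eq_mul]
  have hAH : x ⬝ᵥ (A * H) *ᵥ x = l * (x ⬝ᵥ A *ᵥ x) := by
    rw [← mulVec_mulVec, hHx, mulVec_smul, dotProduct_smul, smul_eq_mul]
  have hHH : x ⬝ᵥ H *ᵥ x = l := by rw [hHx, dotProduct_smul, hx, smul_eq_mul, mul_one]
  have hMle : x ⬝ᵥ M *ᵥ x ≤ a * l := by
    simpa only [smul_mulVec, dotProduct_smul, hHH, smul_eq_mul] using hM.dotProduct_mulVec_le x
  simp only [add_mulVec, sub_mulVec, smul_mulVec, dotProduct_add, dotProduct_sub, dotProduct_smul,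
    smul_eq_mul, hHA, hAH, hHH]
  nlinarith [mul_le_mul_of_nonneg_left hMle (sq_nonneg γ)]

theorem posSemidef_iterate [DecidableEq n] {Ω : Type*} [MeasurableSpace Ω] {μ : Measure Ω}
    {γ s : ℝ} {S : Ω → Matrix n n ℝ} {H : Matrix n n ℝ} {C : ℕ → Matrix n n ℝ}
    (hS : ∀ ω, (S ω).IsHermitian) (hH : H.PosSemidef) (hs : 0 ≤ s)
    (hT : ∀ t i j, Integrable (fun ω => ((1 - γ • S ω) * C t * (1 - γ • S ω)) i j) μ)
    (hC0 : C 0 = 0)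
    (hC : ∀ t, C (t + 1) = mex μ (fun ω => (1 - γ • S ω) * C t * (1 - γ • S ω)) + s • H) :
    ∀ t, (C t).PosSemidef
  | 0 => by rw [hC0]; exact PosSemidef.zero
  | t + 1 => by
    rw [hC t]
    refine (posSemidef_mex_s18 (hT t) fun ω => ?_).add (hH.smul hs)
    have hself : (1 - γ • S ω)ᴴ = 1 - γ • S ω := by
      rw [conjTranspose_sub, conjTranspose_one, conjTranspose_smul, star_trivial, (hS ω).eq]
    have h := (posSemidef_iterate hS hH hs hT hC0 hC t).conjTranspose_mul_mul_same (1 - γ • S ω)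
    rwa [hself] at h

theorem dotProduct_mulVec_iterate_le [DecidableEq n] {ι Ω : Type*} [Fintype ι] [MeasurableSpace Ω]
    {μ : Measure Ω} [IsProbabilityMeasure μ] {γ α σ : ℝ} {S : Ω → Matrix n n ℝ}
    {H : Matrix n n ℝ} {C : ℕ → Matrix n n ℝ} {lam : ι → ℝ} {v : ι → n → ℝ}
    (hγ : 0 < γ) (hα : 0 ≤ α) (hσ : 0 ≤ σ) (hSmean : mex μ S = H)
    (hIntM : ∀ (A : Matrix n n ℝ) i j, Integrable (fun ω => (S ω * A * S ω) i j) μ)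
    (hIntT : ∀ (A : Matrix n n ℝ) i j,
      Integrable (fun ω => ((1 - γ • S ω) * A * (1 - γ • S ω)) i j) μ)
    (hfourth : ∀ A : Matrix n n ℝ, A.PosSemidef →
      loew (mex μ (fun ω => S ω * A * S ω)) ((α * (H * A).trace) • H))
    (hCpsd : ∀ t, (C t).PosSemidef) (hC0 : C 0 = 0)
    (hC : ∀ t, C (t + 1) = mex μ (fun ω => (1 - γ • S ω) * C t * (1 - γ • S ω)) + (γ ^ 2 * σ) • H)
    (hlam : ∀ i, 0 ≤ lam i) (hH : H = ∑ i, lam i • vecMulVec (v i) (v i))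
    (hHv : ∀ i, H *ᵥ v i = lam i • v i) (hvv : ∀ i, v i ⬝ᵥ v i = 1)
    (hp : ∀ i, 0 ≤ 1 - γ * lam i) (hD : γ * α * ∑ i, lam i < 1) :
    ∀ t i, v i ⬝ᵥ C t *ᵥ v i ≤ γ * σ / (1 - γ * α * ∑ i, lam i) * (1 - (1 - γ * lam i) ^ t) := by
  have hHT : Hᵀ = H := by rw [hH, transpose_sum_smul_vecMulVec]
  have hS := integrable_apply_of_sandwich hγ.ne' hIntT hIntM
  refine le_mul_one_sub_pow_of_recursion hγ.le hα hσ hlam hp hD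
    (fun t i => by simpa using (hCpsd t).dotProduct_mulVec_nonneg (v i))
    (fun i => by simp [hC0]) fun t i => ?_
  have h := dotProduct_mulVec_step_le (A := C t) (γ := γ) (s := γ ^ 2 * σ) hHT (hHv i) (hvv i)
    (hfourth _ (hCpsd t))
  rw [hH, trace_sum_smul_vecMulVec_mul, ← hH] at h
  simpa only [hC, mex_sandwich γ _ hS (hIntM _), hSmean] using h

end Iterates

section Sums

theorem sum_Ico_pow_sub_le {p : ℝ} (hp0 : 0 ≤ p) (hp1 : p < 1) (t N : ℕ) :
    ∑ k ∈ Ico t N, p ^ (k - t) ≤ 1 / (1 - p) := by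
  calc ∑ k ∈ Ico t N, p ^ (k - t) = ∑ k ∈ Ico 0 (N - t), p ^ k := by
        rw [sum_Ico_eq_sum_range, range_eq_Ico]
        simp only [add_tsub_cancel_left]
    _ ≤ p ^ 0 / (1 - p) := geom_sum_Ico_le_of_lt_one hp0 hp1
    _ = 1 / (1 - p) := by rw [pow_zero]

variable {N : ℕ} {γ l c : ℝ} {q : ℕ → ℝ}

theorem sum_sum_Ico_le_div (hγ : 0 < γ) (hl : 0 < l) (hp : 0 ≤ 1 - γ * l) (hc : 0 ≤ c)
    (hq_nonneg : ∀ t, 0 ≤ q t) (hq : ∀ t, q t ≤ c * (1 - (1 - γ * l) ^ t)) :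
    ∑ t ∈ range N, ∑ k ∈ Ico t N, l * (1 - γ * l) ^ (k - t) * q t ≤ N * (c / γ) := by
  have hγl : 0 < γ * l := mul_pos hγ hl
  have hinner (t : ℕ) : ∑ k ∈ Ico t N, l * (1 - γ * l) ^ (k - t) * q t ≤ c / γ := by
    have hgeom : ∑ k ∈ Ico t N, (1 - γ * l) ^ (k - t) ≤ 1 / (γ * l) := by
      simpa using sum_Ico_pow_sub_le hp (by linarith) t N
    have hqc : q t ≤ c := (hq t).trans (mul_le_of_le_one_right hc (sub_le_self _ (pow_nonneg hp t)))
    rw [← sum_mul, ← mul_sum]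
    calc l * (∑ k ∈ Ico t N, (1 - γ * l) ^ (k - t)) * q t ≤ l * (1 / (γ * l)) * c :=
          mul_le_mul (mul_le_mul_of_nonneg_left hgeom hl.le) hqc (hq_nonneg t) (by positivity)
      _ = c / γ := by field_simp
  calc _ ≤ ∑ t ∈ range N, c / γ := sum_le_sum fun t _ => hinner t
    _ = N * (c / γ) := by rw [sum_const, card_range, nsmul_eq_mul]

theorem sum_sum_Ico_le_cube (hγ : 0 ≤ γ) (hl : 0 ≤ l) (hp : 0 ≤ 1 - γ * l) (hc : 0 ≤ c)
    (hq_nonneg : ∀ t, 0 ≤ q t) (hq : ∀ t, q t ≤ c * (1 - (1 - γ * l) ^ t)) :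
    ∑ t ∈ range N, ∑ k ∈ Ico t N, l * (1 - γ * l) ^ (k - t) * q t ≤ N ^ 3 * (c * γ * l ^ 2) := by
  have hterm (t k : ℕ) (ht : t < N) :
      l * (1 - γ * l) ^ (k - t) * q t ≤ N * (c * γ * l ^ 2) := by
    have hbern := one_add_mul_le_pow (a := -(γ * l)) (by nlinarith) t
    rw [← sub_eq_add_neg] at hbern
    have hqt : q t ≤ c * (N * (γ * l)) := by
      refine (hq t).trans (mul_le_mul_of_nonneg_left ?_ hc)
      have : (t : ℝ) * (γ * l) ≤ N * (γ * l) :=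
        mul_le_mul_of_nonneg_right (by exact_mod_cast ht.le) (mul_nonneg hγ hl)
      linarith
    calc l * (1 - γ * l) ^ (k - t) * q t ≤ l * 1 * (c * (N * (γ * l))) := by
          gcongr
          · exact hq_nonneg t
          · exact pow_le_one₀ hp (by nlinarith)
      _ = N * (c * γ * l ^ 2) := by ring
  have hK : 0 ≤ (N : ℝ) * (c * γ * l ^ 2) := by positivity
  calc _ ≤ ∑ t ∈ range N, ∑ k ∈ Ico t N, (N : ℝ) * (c * γ * l ^ 2) :=
        sum_le_sum fun t ht => sum_le_sum fun k _ => hterm t k (mem_range.mp ht)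
    _ ≤ ∑ t ∈ range N, (N : ℝ) * (N * (c * γ * l ^ 2)) := by
        refine sum_le_sum fun t _ => ?_
        rw [sum_const, Nat.card_Ico, nsmul_eq_mul]
        exact mul_le_mul_of_nonneg_right (by exact_mod_cast N.sub_le t) hK
    _ = N ^ 3 * (c * γ * l ^ 2) := by rw [sum_const, card_range, nsmul_eq_mul]; ring

theorem sum_le_mul_add_sum_filter {d : ℕ} (k : ℕ) {F B : Fin d → ℝ} {A : ℝ} (hA : 0 ≤ A)
    (hFA : ∀ i, F i ≤ A) (hFB : ∀ i, F i ≤ B i) :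
    ∑ i, F i ≤ k * A + ∑ i ∈ univ.filter (fun i : Fin d => k ≤ (i : ℕ)), B i := by
  rw [← sum_filter_add_sum_filter_not univ (fun i : Fin d => k ≤ (i : ℕ)), add_comm]
  gcongr with i
  · calc _ ≤ ∑ i ∈ univ.filter (fun i : Fin d => ¬k ≤ (i : ℕ)), A := sum_le_sum fun i _ => hFA i
      _ ≤ k * A := by
        simp only [not_le, sum_const, nsmul_eq_mul, Fin.card_filter_val_lt]
        gcongr
        exact_mod_cast min_le_right d k
  · exact hFB i

theorem one_div_sq_mul_sum_le_effective_dim {d N : ℕ} (hN : 0 < N) (kstar : ℕ) {γ c : ℝ}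
    {lam : Fin d → ℝ} {q : ℕ → Fin d → ℝ} (hγ : 0 < γ) (hc : 0 ≤ c) (hlam : ∀ i, 0 < lam i)
    (hp : ∀ i, 0 ≤ 1 - γ * lam i) (hq_nonneg : ∀ t i, 0 ≤ q t i)
    (hq : ∀ t i, q t i ≤ c * (1 - (1 - γ * lam i) ^ t)) :
    1 / (N : ℝ) ^ 2 * ∑ i, ∑ t ∈ range N, ∑ k ∈ Ico t N, lam i * (1 - γ * lam i) ^ (k - t) * q t i ≤
      c / γ * (kstar / N + N * γ ^ 2 * ∑ i ∈ univ.filter (fun i : Fin d => kstar ≤ (i : ℕ)),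
        lam i ^ 2) := by
  calc _ ≤ 1 / (N : ℝ) ^ 2 * (kstar * (N * (c / γ)) +
        ∑ i ∈ univ.filter (fun i : Fin d => kstar ≤ (i : ℕ)), N ^ 3 * (c * γ * lam i ^ 2)) := by
        gcongr
        exact sum_le_mul_add_sum_filter kstar (by positivity)
          (fun i => sum_sum_Ico_le_div hγ (hlam i) (hp i) hc (hq_nonneg · i) (hq · i))
          (fun i => sum_sum_Ico_le_cube hγ.le (hlam i).le (hp i) hc (hq_nonneg · i) (hq · i))
    _ = _ := by
        rw [← mul_sum, ← mul_sum]
        field_simp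

end Sums

theorem variance_bound_general
    (d N : ℕ) (hN : 0 < N)
    (γ : ℝ) (hγ : 0 < γ)
    -- the randomness of one quantized batch; S = (1/B) X^{qT} X^q
    (Ωs : Type) [MeasurableSpace Ωs] (ν : Measure Ωs) [IsProbabilityMeasure ν]
    (S : Ωs → Matrix (Fin d) (Fin d) ℝ)
    (hSpsd : ∀ ω, (S ω).PosSemidef)
    (Hq : Matrix (Fin d) (Fin d) ℝ) (hHqpd : Hq.PosDef)
    (hSmean : mex ν S = Hq)
    -- γ is small enough that I − γH^q ⪰ 0
    (hcontr : ((1 : Matrix (Fin d) (Fin d) ℝ) - γ • Hq).PosSemidef)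
    -- entrywise integrability of the operator integrands
    (hIntM : ∀ A : Matrix (Fin d) (Fin d) ℝ, ∀ i j : Fin d,
      Integrable (fun ω => (S ω * A * S ω) i j) ν)
    (hIntT : ∀ A : Matrix (Fin d) (Fin d) ℝ, ∀ i j : Fin d,
      Integrable (fun ω =>
        (((1 : Matrix (Fin d) (Fin d) ℝ) - γ • S ω) * A *
          ((1 : Matrix (Fin d) (Fin d) ℝ) - γ • S ω)) i j) ν)
    -- fourth-moment assumption: M_B^q ∘ A ⪯ α_B tr(H^q A) H^q for PSD A
    (αB : ℝ) (hαB : 0 < αB)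
    (hfourth : ∀ A : Matrix (Fin d) (Fin d) ℝ, A.PosSemidef →
      loew (mex ν (fun ω => S ω * A * S ω)) ((αB * (Hq * A).trace) • Hq))
    -- variance iterates: C_t = (I − γT_B^q) ∘ C_{t−1} + γ²σ_G^{q,2} H^q, C₀ = 0
    (σG2 : ℝ) (hσG2 : 0 < σG2)
    (Cseq : ℕ → Matrix (Fin d) (Fin d) ℝ)
    (hCseq0 : Cseq 0 = 0)
    (hCseqStep : ∀ t : ℕ, Cseq (t + 1) =
      mex ν (fun ω => ((1 : Matrix (Fin d) (Fin d) ℝ) - γ • S ω) * Cseq t *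
        ((1 : Matrix (Fin d) (Fin d) ℝ) - γ • S ω)) + (γ ^ 2 * σG2) • Hq)
    -- eigendecomposition of H^q and effective dimension k*
    (lam : Fin d → ℝ) (v : Fin d → Fin d → ℝ)
    (hlampos : ∀ i, 0 < lam i)
    (hortho : ∀ i j : Fin d, v i ⬝ᵥ v j = if i = j then (1 : ℝ) else 0)
    (hspec : Hq = ∑ i, lam i • vecMulVec (v i) (v i))
    (kstar : ℕ)
    (hstep : γ < 1 / (αB * Hq.trace)) :
    1 / ((N : ℝ) ^ 2) *
        ∑ t ∈ Finset.range N, ∑ k ∈ Finset.Ico t N,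
          ((((1 : Matrix (Fin d) (Fin d) ℝ) - γ • Hq) ^ (k - t) * Hq)ᵀ * Cseq t).trace ≤
      σG2 / (1 - γ * αB * Hq.trace) *
        ((kstar : ℝ) / (N : ℝ) +
          (N : ℝ) * γ ^ 2 * ∑ i ∈ Finset.univ.filter (fun i : Fin d => kstar ≤ (i : ℕ)), lam i ^ 2) := by
  have hvv (i : Fin d) : v i ⬝ᵥ v i = 1 := by simp [hortho]
  have hHv : ∀ i, Hq *ᵥ v i = lam i • v i := hspec ▸ sum_smul_vecMulVec_mulVec lam v hortho
  have hPv (i : Fin d) : (1 - γ • Hq) *ᵥ v i = (1 - γ * lam i) • v i := by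
    rw [sub_mulVec, one_mulVec, smul_mulVec, hHv, smul_smul, sub_smul, one_smul]
  have hp (i : Fin d) : 0 ≤ 1 - γ * lam i := by
    simpa [hPv, hvv] using hcontr.dotProduct_mulVec_nonneg (v i)
  have htr : Hq.trace = ∑ i, lam i := by
    have h := trace_sum_smul_vecMulVec_mul lam v 1
    rw [← hspec] at h
    simpa [hvv] using h
  have hD : γ * αB * ∑ i, lam i < 1 := by
    have hαtr : 0 < αB * Hq.trace := by
      by_contra h
      linarith [one_div_nonpos.mpr (not_lt.mp h)]
    rw [← htr, mul_assoc]
    exact (lt_div_iff₀ hαtr).mp hstep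
  have hC := posSemidef_iterate (fun ω => (hSpsd ω).1) hHqpd.posSemidef (by positivity)
    (fun t => hIntT (Cseq t)) hCseq0 hCseqStep
  have hq := dotProduct_mulVec_iterate_le hγ hαB.le hσG2.le hSmean hIntM hIntT hfourth hC hCseq0
    hCseqStep (fun i => (hlampos i).le) hspec hHv hvv hp hD
  rw [sum_sum_Ico_trace_eq lam v hspec hPv]
  calc _ ≤ γ * σG2 / (1 - γ * αB * ∑ i, lam i) / γ * ((kstar : ℝ) / N + N * γ ^ 2 *
        ∑ i ∈ univ.filter (fun i : Fin d => kstar ≤ (i : ℕ)), lam i ^ 2) :=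
        one_div_sq_mul_sum_le_effective_dim hN kstar hγ (div_nonneg (by positivity) (by linarith))
          hlampos hp (fun t i => by simpa using (hC t).dotProduct_mulVec_nonneg (v i)) hq
    _ = _ := by rw [htr, mul_div_assoc, mul_div_cancel_left₀ _ hγ.ne']

theorem variance_bound
    (d N : ℕ) (hN : 0 < N)
    (γ : ℝ) (hγ : 0 < γ)
    -- the randomness of one quantized batch; S = (1/B) X^{qT} X^q
    (Ωs : Type) [MeasurableSpace Ωs] (ν : Measure Ωs) [IsProbabilityMeasure ν]
    (S : Ωs → Matrix (Fin d) (Fin d) ℝ)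
    (hSpsd : ∀ ω, (S ω).PosSemidef)
    (Hq : Matrix (Fin d) (Fin d) ℝ) (hHqpd : Hq.PosDef)
    (hSmean : mex ν S = Hq)
    -- γ is small enough that I − γH^q ⪰ 0
    (hcontr : ((1 : Matrix (Fin d) (Fin d) ℝ) - γ • Hq).PosSemidef)
    -- entrywise integrability of the operator integrands
    (hIntM : ∀ A : Matrix (Fin d) (Fin d) ℝ, ∀ i j : Fin d,
      Integrable (fun ω => (S ω * A * S ω) i j) ν)
    (hIntT : ∀ A : Matrix (Fin d) (Fin d) ℝ, ∀ i j : Fin d,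
      Integrable (fun ω =>
        (((1 : Matrix (Fin d) (Fin d) ℝ) - γ • S ω) * A *
          ((1 : Matrix (Fin d) (Fin d) ℝ) - γ • S ω)) i j) ν)
    -- fourth-moment assumption: M_B^q ∘ A ⪯ α_B tr(H^q A) H^q for PSD A
    (αB : ℝ) (hαB : 0 < αB)
    (hfourth : ∀ A : Matrix (Fin d) (Fin d) ℝ, A.PosSemidef →
      loew (mex ν (fun ω => S ω * A * S ω)) ((αB * (Hq * A).trace) • Hq))
    -- variance iterates: C_t = (I − γT_B^q) ∘ C_{t−1} + γ²σ_G^{q,2} H^q, C₀ = 0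
    (σG2 : ℝ) (hσG2 : 0 < σG2)
    (Cseq : ℕ → Matrix (Fin d) (Fin d) ℝ)
    (hCseq0 : Cseq 0 = 0)
    (hCseqStep : ∀ t : ℕ, Cseq (t + 1) =
      mex ν (fun ω => ((1 : Matrix (Fin d) (Fin d) ℝ) - γ • S ω) * Cseq t *
        ((1 : Matrix (Fin d) (Fin d) ℝ) - γ • S ω)) + (γ ^ 2 * σG2) • Hq)
    -- eigendecomposition of H^q and effective dimension k*
    (lam : Fin d → ℝ) (v : Fin d → Fin d → ℝ)
    (hlam : ∀ i j : Fin d, i ≤ j → lam j ≤ lam i)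
    (hlampos : ∀ i, 0 < lam i)
    (hortho : ∀ i j : Fin d, v i ⬝ᵥ v j = if i = j then (1 : ℝ) else 0)
    (hspec : Hq = ∑ i, lam i • vecMulVec (v i) (v i))
    (kstar : ℕ)
    (hkstar : ∀ i : Fin d, (i : ℕ) < kstar ↔ 1 / ((N : ℝ) * γ) ≤ lam i)
    (hstep : γ < 1 / (αB * Hq.trace)) :
    1 / ((N : ℝ) ^ 2) *
        ∑ t ∈ Finset.range N, ∑ k ∈ Finset.Ico t N,
          ((((1 : Matrix (Fin d) (Fin d) ℝ) - γ • Hq) ^ (k - t) * Hq)ᵀ * Cseq t).trace ≤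
      σG2 / (1 - γ * αB * Hq.trace) *
        ((kstar : ℝ) / (N : ℝ) +
          (N : ℝ) * γ ^ 2 * ∑ i ∈ Finset.univ.filter (fun i : Fin d => kstar ≤ (i : ℕ)), lam i ^ 2) :=
  variance_bound_general d N hN γ hγ Ωs ν S hSpsd Hq hHqpd hSmean hcontr hIntM hIntT αB hαB hfourth
    σG2 hσG2 Cseq hCseq0 hCseqStep lam v hlampos hortho hspec kstar hstep

end
end
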